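/- arXiv:1103.3267 — 2 statements merged into one kernel-verified Lean document; each statement's English description precedes it below -/
import Mathlib

section
/- Let u : ℝ × ℝ → ℝ be twice continuously differentiable and satisfy the wave equation u_tt − u_xx = 0 at every point, and let g¹, g² : ℝ × ℝ → ℝ be continuously differentiable with g¹_x + g¹_t = 0 and g²_x − g²_t = 0 at every point. Then the conservation law ∂_x[(g¹+g²)u_x − (g¹−g²)u_t] + ∂_t[(g¹−g²)u_x − (g¹+g²)u_t] = 0 holds at every point (x,t). -/
/-! The flux splits along the characteristics: with `a = u_x - u_t` and `b = u_x + u_t` it is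
`(g¹a + g²b, g¹a - g²b)`, so its divergence is `(∂_x + ∂_t)(g¹a) + (∂_x - ∂_t)(g²b)`. By the symmetry
of second derivatives, `(∂_x + ∂_t)a = (∂_x - ∂_t)b = u_xx - u_tt = 0`, while `g¹` and `g²` are
constant along the same directions, so both terms vanish by the product rule. -/

/-- Partial derivative with respect to the first (space) variable `x`. -/
noncomputable def px (u : ℝ × ℝ → ℝ) (p : ℝ × ℝ) : ℝ := fderiv ℝ u p (1, 0)

/-- Partial derivative with respect to the second (time) variable `t`. -/
noncomputable def pt (u : ℝ × ℝ → ℝ) (p : ℝ × ℝ) : ℝ := fderiv ℝ u p (0, 1)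

section

variable {𝕜 E F 𝔸 : Type*} [NontriviallyNormedField 𝕜] [NormedAddCommGroup E] [NormedSpace 𝕜 E]
  [NormedAddCommGroup F] [NormedSpace 𝕜 F] [NormedCommRing 𝔸] [NormedAlgebra 𝕜 𝔸] {p : E}

theorem fderiv_fderiv_apply_eq {u : E → F} (hu : DifferentiableAt 𝕜 (fderiv 𝕜 u) p) (v w : E) :
    fderiv 𝕜 (fun q => fderiv 𝕜 u q v) p w = fderiv 𝕜 (fderiv 𝕜 u) p w v := by
  simp [fderiv_clm_apply hu (differentiableAt_const v)]

theorem fderiv_mul_apply_eq_zero {f g : E → 𝔸} (hf : DifferentiableAt 𝕜 f p)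
    (hg : DifferentiableAt 𝕜 g p) {v : E} (hfv : fderiv 𝕜 f p v = 0) (hgv : fderiv 𝕜 g p v = 0) :
    fderiv 𝕜 (fun q => f q * g q) p v = 0 := by
  simp [fderiv_fun_mul hf hg, hfv, hgv]

end

namespace ContDiffAt

variable {𝕜 E F : Type*} [RCLike 𝕜] [NormedAddCommGroup E] [NormedSpace 𝕜 E]
  [NormedAddCommGroup F] [NormedSpace 𝕜 F] {u : E → F} {p : E}

theorem differentiableAt_fderiv (hu : ContDiffAt 𝕜 2 u p) : DifferentiableAt 𝕜 (fderiv 𝕜 u) p :=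
  (hu.fderiv_right (m := 1) le_rfl).differentiableAt one_ne_zero

theorem fderiv_fderiv_apply_comm (hu : ContDiffAt 𝕜 2 u p) (v w : E) :
    fderiv 𝕜 (fun q => fderiv 𝕜 u q v) p w = fderiv 𝕜 (fun q => fderiv 𝕜 u q w) p v := by
  rw [fderiv_fderiv_apply_eq hu.differentiableAt_fderiv,
    fderiv_fderiv_apply_eq hu.differentiableAt_fderiv]
  exact hu.isSymmSndFDerivAt (by simp [minSmoothness_of_isRCLikeNormedField]) w v

theorem fderiv_fderiv_apply_add_sub (hu : ContDiffAt 𝕜 2 u p) (v w : E) :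
    fderiv 𝕜 (fun q => fderiv 𝕜 u q (v + w)) p (v - w) =
      fderiv 𝕜 (fun q => fderiv 𝕜 u q v) p v - fderiv 𝕜 (fun q => fderiv 𝕜 u q w) p w := by
  have hvw := hu.fderiv_fderiv_apply_comm v w
  simp only [fderiv_fderiv_apply_eq hu.differentiableAt_fderiv] at hvw ⊢
  simp only [map_add, map_sub, sub_apply, hvw]
  abel

end ContDiffAt

theorem px_add_add_pt_sub {f h : ℝ × ℝ → ℝ} {p : ℝ × ℝ} (hf : DifferentiableAt ℝ f p)
    (hh : DifferentiableAt ℝ h p) :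
    px (fun q => f q + h q) p + pt (fun q => f q - h q) p =
      fderiv ℝ f p ((1, 0) + (0, 1)) + fderiv ℝ h p ((1, 0) - (0, 1)) := by
  simp only [px, pt, fderiv_fun_add hf hh, fderiv_fun_sub hf hh, map_add, map_sub, add_apply,
    sub_apply]
  ring

/-- If `u` solves the wave equation `u_tt − u_xx = 0` and `g¹_x + g¹_t = 0`,
`g²_x − g²_t = 0`, then the conservation law
`D_x[(g¹+g²)u_x − (g¹−g²)u_t] + D_t[(g¹−g²)u_x − (g¹+g²)u_t] = 0` holds everywhere. -/
theorem stmt_3 (u : ℝ × ℝ → ℝ) (hu : ContDiff ℝ 2 u)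
    (hwave : ∀ p, pt (pt u) p - px (px u) p = 0)
    (g1 g2 : ℝ × ℝ → ℝ) (hg1 : ContDiff ℝ 1 g1) (hg2 : ContDiff ℝ 1 g2)
    (hc1 : ∀ p, px g1 p + pt g1 p = 0) (hc2 : ∀ p, px g2 p - pt g2 p = 0)
    (p : ℝ × ℝ) :
    px (fun q => (g1 q + g2 q) * px u q - (g1 q - g2 q) * pt u q) p
      + pt (fun q => (g1 q - g2 q) * px u q - (g1 q + g2 q) * pt u q) p = 0 := by
  have hdu (v : ℝ × ℝ) : DifferentiableAt ℝ (fun q => fderiv ℝ u q v) p :=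
    hu.contDiffAt.differentiableAt_fderiv.clm_apply (differentiableAt_const v)
  have hflux₁ : (fun q => (g1 q + g2 q) * px u q - (g1 q - g2 q) * pt u q) = fun q =>
      g1 q * fderiv ℝ u q ((1, 0) - (0, 1)) + g2 q * fderiv ℝ u q ((1, 0) + (0, 1)) := by
    funext q; simp only [px, pt, map_add, map_sub]; ring
  have hflux₂ : (fun q => (g1 q - g2 q) * px u q - (g1 q + g2 q) * pt u q) = fun q =>
      g1 q * fderiv ℝ u q ((1, 0) - (0, 1)) - g2 q * fderiv ℝ u q ((1, 0) + (0, 1)) := by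
    funext q; simp only [px, pt, map_add, map_sub]; ring
  have hwave' : fderiv ℝ (fun q => fderiv ℝ u q (1, 0)) p (1, 0)
      - fderiv ℝ (fun q => fderiv ℝ u q (0, 1)) p (0, 1) = 0 :=
    sub_eq_zero.mpr (sub_eq_zero.mp (hwave p)).symm
  have hminus : fderiv ℝ (fun q => fderiv ℝ u q ((1, 0) - (0, 1))) p ((1, 0) + (0, 1)) = 0 := by
    rw [hu.contDiffAt.fderiv_fderiv_apply_comm, hu.contDiffAt.fderiv_fderiv_apply_add_sub, hwave']
  have hplus : fderiv ℝ (fun q => fderiv ℝ u q ((1, 0) + (0, 1))) p ((1, 0) - (0, 1)) = 0 := by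
    rw [hu.contDiffAt.fderiv_fderiv_apply_add_sub, hwave']
  have hdg1 := hg1.differentiable one_ne_zero p
  have hdg2 := hg2.differentiable one_ne_zero p
  rw [hflux₁, hflux₂, px_add_add_pt_sub (hdg1.fun_mul (hdu _)) (hdg2.fun_mul (hdu _)),
    fderiv_mul_apply_eq_zero hdg1 (hdu _) ((map_add _ _ _).trans (hc1 p)) hminus,
    fderiv_mul_apply_eq_zero hdg2 (hdu _) ((map_sub _ _ _).trans (hc2 p)) hplus, add_zero]
end

section
/- Lagrange-multiplier identity for the shallow water relabelling symmetries: let x, y : ℝ³ → ℝ be smooth functions of (a¹, a², t) with J = x_{,1}y_{,2} − x_{,2}y_{,1} nowhere zero, h = 1/J, and let f, g ∈ ℝ. Define E_x = −ẍ + fẏ − g·∂h/∂x and E_y = −ÿ − fẋ − g·∂h/∂y, and set ν¹ = ẋx_{,1} + ẏy_{,1} + f·x·y_{,1}, ν² = ẋx_{,2} + ẏy_{,2} + f·x·y_{,2}, ν³ = −½(ẋ² + ẏ²) − f·x·ẏ + g·h. Then the identities x_{,1}E_x + y_{,1}E_y = −ν̇¹ − ν³_{,1} and x_{,2}E_x +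 y_{,2}E_y = −ν̇² − ν³_{,2} hold at every point, identically in x and y. -/
noncomputable section

/-- Partial derivative with respect to the label `a¹`. -/
def d1 (F : ℝ × ℝ × ℝ → ℝ) (p : ℝ × ℝ × ℝ) : ℝ := fderiv ℝ F p (1, 0, 0)

/-- Partial derivative with respect to the label `a²`. -/
def d2 (F : ℝ × ℝ × ℝ → ℝ) (p : ℝ × ℝ × ℝ) : ℝ := fderiv ℝ F p (0, 1, 0)

/-- Partial derivative with respect to time `t` (overdot). -/
def dt (F : ℝ × ℝ × ℝ → ℝ) (p : ℝ × ℝ × ℝ) : ℝ := fderiv ℝ F p (0, 0, 1)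

/-- The Jacobian `J = x_{,1}y_{,2} − x_{,2}y_{,1}`. -/
def Jac (x y : ℝ × ℝ × ℝ → ℝ) (p : ℝ × ℝ × ℝ) : ℝ :=
  d1 x p * d2 y p - d2 x p * d1 y p

/-- The fluid depth `h = 1/J`. -/
def dep (x y : ℝ × ℝ × ℝ → ℝ) : ℝ × ℝ × ℝ → ℝ := fun p => 1 / Jac x y p

/-- The Eulerian derivative `∂F/∂x = h(y_{,2}F_{,1} − y_{,1}F_{,2})`. -/
def Dex (x y F : ℝ × ℝ × ℝ → ℝ) (p : ℝ × ℝ × ℝ) : ℝ :=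
  dep x y p * (d2 y p * d1 F p - d1 y p * d2 F p)

/-- The Eulerian derivative `∂F/∂y = h(−x_{,2}F_{,1} + x_{,1}F_{,2})`. -/
def Dey (x y F : ℝ × ℝ × ℝ → ℝ) (p : ℝ × ℝ × ℝ) : ℝ :=
  dep x y p * (-(d2 x p) * d1 F p + d1 x p * d2 F p)

/-- Euler–Lagrange expression `E_x = −ẍ + fẏ − g·∂h/∂x` of Salmon's shallow water Lagrangian. -/
def SWEx (x y : ℝ × ℝ × ℝ → ℝ) (f g : ℝ) (p : ℝ × ℝ × ℝ) : ℝ :=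
  -(dt (fun q => dt x q) p) + f * dt y p - g * Dex x y (dep x y) p

/-- Euler–Lagrange expression `E_y = −ÿ − fẋ − g·∂h/∂y` of Salmon's shallow water Lagrangian. -/
def SWEy (x y : ℝ × ℝ × ℝ → ℝ) (f g : ℝ) (p : ℝ × ℝ × ℝ) : ℝ :=
  -(dt (fun q => dt y q) p) - f * dt x p - g * Dey x y (dep x y) p

/-- Lagrange multiplier `ν¹ = ẋx_{,1} + ẏy_{,1} + f·x·y_{,1}`. -/
def nu1 (x y : ℝ × ℝ × ℝ → ℝ) (f : ℝ) : ℝ × ℝ × ℝ → ℝ :=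
  fun p => dt x p * d1 x p + dt y p * d1 y p + f * x p * d1 y p

/-- Lagrange multiplier `ν² = ẋx_{,2} + ẏy_{,2} + f·x·y_{,2}`. -/
def nu2 (x y : ℝ × ℝ × ℝ → ℝ) (f : ℝ) : ℝ × ℝ × ℝ → ℝ :=
  fun p => dt x p * d2 x p + dt y p * d2 y p + f * x p * d2 y p

/-- Lagrange multiplier `ν³ = −½(ẋ² + ẏ²) − f·x·ẏ + g·h`. -/
def nu3 (x y : ℝ × ℝ × ℝ → ℝ) (f g : ℝ) : ℝ × ℝ × ℝ → ℝ :=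
  fun p => -(1 / 2 : ℝ) * ((dt x p) ^ 2 + (dt y p) ^ 2) - f * x p * dt y p + g * dep x y p

/-!
Fix a label direction `v`. Expanding `ν̇` and `ν³_{,v}` by the product rule, the kinetic and
Coriolis terms of `x_{,v}E_x + y_{,v}E_y` and of `−ν̇ − ν³_{,v}` agree once the mixed partials
`(x_{,v})˙ = (ẋ)_{,v}` are identified. The pressure terms agree because the Eulerian derivatives
invert the Lagrangian ones: `x_{,i} ∂F/∂x + y_{,i} ∂F/∂y = F_{,i}` for `i = 1, 2` wherever `J ≠ 0`,
which turns `g (x_{,i} ∂h/∂x + y_{,i} ∂h/∂y)` into `(g h)_{,i}`.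
-/

section Calculus

variable {E G : Type*} [NormedAddCommGroup E] [NormedSpace ℝ E]
  [NormedAddCommGroup G] [NormedSpace ℝ G] {F : E → G} {p : E}

theorem ContDiffAt.differentiableAt_fderiv_apply (hF : ContDiffAt ℝ 2 F p) (v : E) :
    DifferentiableAt ℝ (fun q => fderiv ℝ F q v) p :=
  ((hF.fderiv_right (m := 1) (by norm_num)).differentiableAt one_ne_zero).clm_apply
    (differentiableAt_const v)

theorem ContDiffAt.fderiv_fderiv_apply_comm_s9 (hF : ContDiffAt ℝ 2 F p) (v w : E) :
    fderiv ℝ (fun q => fderiv ℝ F q v) p w = fderiv ℝ (fun q => fderiv ℝ F q w) p v := by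
  have hd : DifferentiableAt ℝ (fderiv ℝ F) p :=
    (hF.fderiv_right (m := 1) (by norm_num)).differentiableAt one_ne_zero
  rw [fderiv_clm_apply hd (differentiableAt_const v),
    fderiv_clm_apply hd (differentiableAt_const w)]
  simp only [fderiv_fun_const, Pi.zero_apply, ContinuousLinearMap.comp_zero, zero_add,
    ContinuousLinearMap.flip_apply]
  exact hF.isSymmSndFDerivAt (by simp) w v

end Calculus

section Kinetic

variable {E : Type*} [NormedAddCommGroup E] [NormedSpace ℝ E] {x y : E → ℝ} {p : E}

theorem kinetic_relabelling_identity (hx : ContDiffAt ℝ 2 x p) (hy : ContDiffAt ℝ 2 y p)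
    (f : ℝ) (v τ : E) :
    fderiv ℝ x p v * (-fderiv ℝ (fun q => fderiv ℝ x q τ) p τ + f * fderiv ℝ y p τ)
        + fderiv ℝ y p v * (-fderiv ℝ (fun q => fderiv ℝ y q τ) p τ - f * fderiv ℝ x p τ)
      = -fderiv ℝ (fun q => fderiv ℝ x q τ * fderiv ℝ x q v + fderiv ℝ y q τ * fderiv ℝ y q v
            + f * x q * fderiv ℝ y q v) p τ
        - fderiv ℝ (fun q => -(1 / 2 : ℝ) * (fderiv ℝ x q τ ^ 2 + fderiv ℝ y q τ ^ 2)
            - f * x q * fderiv ℝ y q τ) p v := by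
  have Hx := (hx.differentiableAt (by norm_num)).hasFDerivAt
  have Hxτ := (hx.differentiableAt_fderiv_apply τ).hasFDerivAt
  have Hxv := (hx.differentiableAt_fderiv_apply v).hasFDerivAt
  have Hyτ := (hy.differentiableAt_fderiv_apply τ).hasFDerivAt
  have Hyv := (hy.differentiableAt_fderiv_apply v).hasFDerivAt
  rw [(((Hxτ.fun_mul Hxv).fun_add (Hyτ.fun_mul Hyv)).fun_add
      ((Hx.const_mul f).fun_mul Hyv)).fderiv,
    ((((Hxτ.pow 2).fun_add (Hyτ.pow 2)).const_mul (-(1 / 2 : ℝ))).fun_sub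
      ((Hx.const_mul f).fun_mul Hyτ)).fderiv]
  simp only [add_apply, smul_apply, smul_eq_mul, sub_apply, nsmul_eq_mul,
    Nat.cast_ofNat, Nat.add_one_sub_one, pow_one]
  rw [hx.fderiv_fderiv_apply_comm_s9 v τ, hy.fderiv_fderiv_apply_comm_s9 v τ]
  ring

end Kinetic

section ShallowWater

variable {x y : ℝ × ℝ × ℝ → ℝ} {p : ℝ × ℝ × ℝ}

theorem d1_mul_Dex_add_d1_mul_Dey (F : ℝ × ℝ × ℝ → ℝ) (hJ : Jac x y p ≠ 0) :
    d1 x p * Dex x y F p + d1 y p * Dey x y F p = d1 F p := by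
  unfold Dex Dey dep
  field_simp
  unfold Jac
  ring

theorem d2_mul_Dex_add_d2_mul_Dey (F : ℝ × ℝ × ℝ → ℝ) (hJ : Jac x y p ≠ 0) :
    d2 x p * Dex x y F p + d2 y p * Dey x y F p = d2 F p := by
  unfold Dex Dey dep
  field_simp
  unfold Jac
  ring

theorem differentiableAt_Jac (hx : ContDiffAt ℝ 2 x p) (hy : ContDiffAt ℝ 2 y p) :
    DifferentiableAt ℝ (Jac x y) p :=
  ((hx.differentiableAt_fderiv_apply _).fun_mul (hy.differentiableAt_fderiv_apply _)).fun_sub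
    ((hx.differentiableAt_fderiv_apply _).fun_mul (hy.differentiableAt_fderiv_apply _))

theorem differentiableAt_dep (hx : ContDiffAt ℝ 2 x p) (hy : ContDiffAt ℝ 2 y p)
    (hJ : Jac x y p ≠ 0) : DifferentiableAt ℝ (dep x y) p := by
  unfold dep
  simpa only [one_div] using (differentiableAt_Jac hx hy).fun_inv hJ

theorem relabelling_identity (hx : ContDiffAt ℝ 2 x p) (hy : ContDiffAt ℝ 2 y p)
    (hJ : Jac x y p ≠ 0) (f g : ℝ) (v : ℝ × ℝ × ℝ)
    (hchain : fderiv ℝ x p v * Dex x y (dep x y) p + fderiv ℝ y p v * Dey x y (dep x y) p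
      = fderiv ℝ (dep x y) p v) :
    fderiv ℝ x p v * SWEx x y f g p + fderiv ℝ y p v * SWEy x y f g p
      = -dt (fun q => dt x q * fderiv ℝ x q v + dt y q * fderiv ℝ y q v
            + f * x q * fderiv ℝ y q v) p
        - fderiv ℝ (nu3 x y f g) p v := by
  have hkin := kinetic_relabelling_identity hx hy f v (0, 0, 1)
  have hsplit : nu3 x y f g = fun q => (-(1 / 2 : ℝ) * (dt x q ^ 2 + dt y q ^ 2)
      - f * x q * dt y q) + g * dep x y q := rfl
  have hkinDiff : DifferentiableAt ℝ (fun q => -(1 / 2 : ℝ) * (dt x q ^ 2 + dt y q ^ 2)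
      - f * x q * dt y q) p := by
    have := hx.differentiableAt_fderiv_apply (0, 0, 1)
    have := hy.differentiableAt_fderiv_apply (0, 0, 1)
    have := hx.differentiableAt (by norm_num)
    unfold dt
    fun_prop
  rw [hsplit, fderiv_fun_add hkinDiff ((differentiableAt_dep hx hy hJ).const_mul g),
    fderiv_const_mul (differentiableAt_dep hx hy hJ)]
  unfold SWEx SWEy
  simp only [add_apply, smul_apply, smul_eq_mul]
  unfold dt at *
  linear_combination hkin - g * hchain

end ShallowWater

open scoped ContDiff in
/-- Lagrange-multiplier identities for the shallow water relabelling symmetries: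
`x_{,i}E_x + y_{,i}E_y = −ν̇ⁱ − ν³_{,i}` for `i = 1, 2`, identically in `x` and `y`. -/
theorem stmt_9 (x y : ℝ × ℝ × ℝ → ℝ) (hx : ContDiff ℝ ∞ x) (hy : ContDiff ℝ ∞ y)
    (f g : ℝ) (hJ : ∀ p, Jac x y p ≠ 0) (p : ℝ × ℝ × ℝ) :
    d1 x p * SWEx x y f g p + d1 y p * SWEy x y f g p
        = -(dt (nu1 x y f) p) - d1 (nu3 x y f g) p ∧
    d2 x p * SWEx x y f g p + d2 y p * SWEy x y f g p
        = -(dt (nu2 x y f) p) - d2 (nu3 x y f g) p := by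
  have hx2 : ContDiffAt ℝ 2 x p := (hx.of_le (WithTop.coe_le_coe.2 le_top)).contDiffAt
  have hy2 : ContDiffAt ℝ 2 y p := (hy.of_le (WithTop.coe_le_coe.2 le_top)).contDiffAt
  exact ⟨relabelling_identity hx2 hy2 (hJ p) f g _ (d1_mul_Dex_add_d1_mul_Dey _ (hJ p)),
    relabelling_identity hx2 hy2 (hJ p) f g _ (d2_mul_Dex_add_d2_mul_Dey _ (hJ p))⟩

end
end
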